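/- arXiv:0807.1265 — 2 statements merged into one kernel-verified Lean document; each statement's English description precedes it below -/
import Mathlib

section
/- If B is a Banach space continuously embedded in tempered distributions such that for all λ > 0 and a ∈ ℝ^d, ‖f(λ(·−a))‖_B = λ^{-1}‖f‖_B, then there is a constant C such that for all f ∈ B, sup_{t>0} t^{1/2} ‖e^{tΔ} f‖_{L^∞} ≤ C‖f‖_B. -/
open MeasureTheory

/-- The heat kernel on ℝ^d. -/
noncomputable def heatKernel (d : ℕ) (t : ℝ) (x : EuclideanSpace ℝ (Fin d)) : ℝ :=
  (4 * Real.pi * t) ^ (-(d : ℝ) / 2) * Real.exp (-‖x‖ ^ 2 / (4 * t))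

/-- The heat semigroup e^{tΔ} acting by convolution with the heat kernel. -/
noncomputable def heatOp (d : ℕ) (t : ℝ) (f : EuclideanSpace ℝ (Fin d) → ℂ)
    (x : EuclideanSpace ℝ (Fin d)) : ℂ :=
  ∫ y, (heatKernel d t (x - y) : ℂ) * f y

section AuxGauss

open Real RealInnerProductSpace

variable {E : Type*} [NormedAddCommGroup E] [InnerProductSpace ℝ E]

variable {E : Type*} [NormedAddCommGroup E] [InnerProductSpace ℝ E]

lemma itfd_id_le (i : ℕ) (x : E) : ‖iteratedFDeriv ℝ i (fun y : E => y) x‖ ≤ max 1 ‖x‖ := by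
  match i with
  | 0 => rw [norm_iteratedFDeriv_zero]; exact le_max_right _ _
  | 1 =>
    refine le_trans ?_ (le_max_left _ _)
    refine ContinuousMultilinearMap.opNorm_le_bound zero_le_one fun m => ?_
    rw [iteratedFDeriv_one_apply, fderiv_id']
    simp
  | (j+2) =>
    have h1 : ‖iteratedFDeriv ℝ (j+1) (fderiv ℝ (fun y : E => y)) x‖
        = ‖iteratedFDeriv ℝ (j+2) (fun y : E => y) x‖ := norm_iteratedFDeriv_fderiv
    have h2 : (fderiv ℝ (fun y : E => y)) = fun _ : E => ContinuousLinearMap.id ℝ E := by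
      ext1 z; exact fderiv_id'
    rw [← h1, h2, iteratedFDeriv_const_of_ne (by omega)]
    simp only [Pi.zero_apply, norm_zero]
    positivity

noncomputable def qform : E →L[ℝ] E →L[ℝ] ℝ := (-(4:ℝ)⁻¹) • innerSL ℝ

lemma qform_apply (u v : E) : qform u v = -(4:ℝ)⁻¹ * ⟪u, v⟫ := rfl

lemma qform_norm_le : ‖(qform : E →L[ℝ] E →L[ℝ] ℝ)‖ ≤ 1 := by
  refine ContinuousLinearMap.opNorm_le_bound _ zero_le_one fun u => ?_
  rw [one_mul]
  refine ContinuousLinearMap.opNorm_le_bound _ (norm_nonneg u) fun v => ?_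
  rw [qform_apply]
  have h := abs_real_inner_le_norm u v
  rw [Real.norm_eq_abs, abs_mul]
  have : |(-(4:ℝ)⁻¹)| ≤ 1 := by rw [abs_neg, abs_of_pos] <;> norm_num
  nlinarith [abs_nonneg ⟪u,v⟫, norm_nonneg u, norm_nonneg v, abs_nonneg (-(4:ℝ)⁻¹)]

lemma qform_contDiff : ContDiff ℝ (⊤ : ℕ∞) (fun u : E => qform u u) :=
  (qform.isBoundedBilinearMap.contDiff).comp (contDiff_id.prodMk contDiff_id)

lemma qform_diag (u : E) : qform u u = -(‖u‖^2) / 4 := by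
  rw [qform_apply, real_inner_self_eq_norm_sq]; ring

lemma itfd_q_le (n : ℕ) (hn : 1 ≤ n) (x : E) :
    ‖iteratedFDeriv ℝ n (fun u : E => qform u u) x‖ ≤ (2 * (1 + ‖x‖)^2) ^ n := by
  have h := (qform (E := E)).norm_iteratedFDeriv_le_of_bilinear (f := fun y : E => y)
    (g := fun y : E => y) (N := ⊤) contDiff_id contDiff_id x (n := n) (mod_cast le_top)
  refine h.trans ?_
  have hM : ∀ i : ℕ, ‖iteratedFDeriv ℝ i (fun y : E => y) x‖ ≤ max 1 ‖x‖ := fun i => itfd_id_le i x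
  set M := max 1 ‖x‖ with hMdef
  have hM0 : 0 ≤ M := le_trans zero_le_one (le_max_left _ _)
  have hsum : (∑ i ∈ Finset.range (n + 1), (n.choose i : ℝ) *
      ‖iteratedFDeriv ℝ i (fun y : E => y) x‖ * ‖iteratedFDeriv ℝ (n-i) (fun y : E => y) x‖)
      ≤ ∑ i ∈ Finset.range (n + 1), (n.choose i : ℝ) * M * M := by
    refine Finset.sum_le_sum fun i _ => ?_
    have h1 := hM i
    have h2 := hM (n - i)
    have hc : (0:ℝ) ≤ (n.choose i : ℝ) := Nat.cast_nonneg _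
    exact mul_le_mul (mul_le_mul_of_nonneg_left h1 hc) h2 (norm_nonneg _) (by positivity)
  have hsum2 : (∑ i ∈ Finset.range (n + 1), (n.choose i : ℝ) * M * M) = 2^n * M^2 := by
    rw [← Finset.sum_mul, ← Finset.sum_mul, ← Nat.cast_sum, Nat.sum_range_choose]
    push_cast; ring
  have hB := qform_norm_le (E := E)
  have hsum_nonneg : (0:ℝ) ≤ ∑ i ∈ Finset.range (n + 1), (n.choose i : ℝ) *
      ‖iteratedFDeriv ℝ i (fun y : E => y) x‖ * ‖iteratedFDeriv ℝ (n-i) (fun y : E => y) x‖ := by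
    refine Finset.sum_nonneg fun i _ => by positivity
  calc ‖(qform : E →L[ℝ] E →L[ℝ] ℝ)‖ * ∑ i ∈ Finset.range (n + 1), (n.choose i : ℝ) *
      ‖iteratedFDeriv ℝ i (fun y : E => y) x‖ * ‖iteratedFDeriv ℝ (n-i) (fun y : E => y) x‖
      ≤ 1 * (2^n * M^2) := by
        refine mul_le_mul hB (hsum.trans (le_of_eq hsum2)) hsum_nonneg zero_le_one
    _ ≤ (2 * (1 + ‖x‖)^2) ^ n := by
        rw [one_mul, mul_pow]
        refine mul_le_mul_of_nonneg_left ?_ (by positivity)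
        have h1 : M ≤ 1 + ‖x‖ := by
          rw [hMdef]; exact max_le (by linarith [norm_nonneg x]) (by linarith)
        have h2 : M^2 ≤ ((1 + ‖x‖)^2)^1 := by
          rw [pow_one]; exact pow_le_pow_left₀ hM0 h1 2
        refine h2.trans (pow_le_pow_right₀ ?_ hn)
        nlinarith [norm_nonneg x]

lemma exp_itfd_norm (s : ℝ) (i : ℕ) : ‖iteratedFDeriv ℝ i Real.exp s‖ = Real.exp s := by
  rw [norm_iteratedFDeriv_eq_norm_iteratedDeriv, iteratedDeriv_eq_iterate, Real.iter_deriv_exp,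
    Real.norm_eq_abs, abs_of_pos (Real.exp_pos s)]

lemma gauss_itfd_le (n : ℕ) (x : E) :
    ‖iteratedFDeriv ℝ n (Real.exp ∘ (fun u : E => qform u u)) x‖ ≤
      (Nat.factorial n) * Real.exp (-(‖x‖^2)/4) * (2*(1+‖x‖)^2)^n := by
  have h := norm_iteratedFDeriv_comp_le (g := Real.exp) (f := fun u : E => qform u u)
    (n := n) (N := ((⊤ : ℕ∞) : WithTop ℕ∞)) (Real.contDiff_exp.of_le (mod_cast le_top)) (qform_contDiff.of_le (mod_cast le_top)) (mod_cast le_top) x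
    (C := Real.exp (qform x x)) (D := 2*(1+‖x‖)^2)
    (fun i _ => le_of_eq (exp_itfd_norm _ i))
    (fun i hi _ => itfd_q_le i hi x)
  rwa [qform_diag] at h

lemma poly_exp_bound (M : ℕ) (r : ℝ) (hr : 0 ≤ r) :
    (1+r)^M * Real.exp (-(r^2)/4) ≤ (Nat.factorial M) * Real.exp 2 := by
  have h1 : (1+r)^M ≤ (Nat.factorial M) * Real.exp (1+r) := by
    have hsum := Real.sum_le_exp_of_nonneg (x := 1+r) (by linarith) (M+1)
    have hterm : (1+r)^M / (Nat.factorial M) ≤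
        ∑ i ∈ Finset.range (M+1), (1+r)^i / (Nat.factorial i) := by
      refine Finset.single_le_sum (f := fun i => (1+r)^i / (Nat.factorial i))
        (fun i _ => by positivity) (Finset.self_mem_range_succ M)
    have hfac : (0:ℝ) < (Nat.factorial M) := by positivity
    rw [div_le_iff₀ hfac] at hterm
    calc (1+r)^M ≤ (∑ i ∈ Finset.range (M+1), (1+r)^i / (Nat.factorial i)) * (Nat.factorial M) :=
          hterm
      _ ≤ Real.exp (1+r) * (Nat.factorial M) := by
          exact mul_le_mul_of_nonneg_right hsum (le_of_lt hfac)
      _ = (Nat.factorial M) * Real.exp (1+r) := by ring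
  calc (1+r)^M * Real.exp (-(r^2)/4)
      ≤ ((Nat.factorial M) * Real.exp (1+r)) * Real.exp (-(r^2)/4) :=
        mul_le_mul_of_nonneg_right h1 (le_of_lt (Real.exp_pos _))
    _ = (Nat.factorial M) * Real.exp ((1+r) + (-(r^2)/4)) := by rw [mul_assoc, ← Real.exp_add]
    _ ≤ (Nat.factorial M) * Real.exp 2 := by
        refine mul_le_mul_of_nonneg_left ?_ (by positivity)
        refine Real.exp_le_exp.2 (by nlinarith [sq_nonneg (r-2)])

noncomputable def gaussSchwartzR : SchwartzMap E ℝ where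
  toFun := fun u => Real.exp (qform u u)
  smooth' := (Real.contDiff_exp.comp qform_contDiff).of_le (mod_cast le_top)
  decay' := by
    intro k n
    refine ⟨(Nat.factorial n) * 2^n * ((Nat.factorial (k + 2*n)) * Real.exp 2), fun x => ?_⟩
    have h1 := gauss_itfd_le (E := E) n x
    set r := ‖x‖ with hr
    have hr0 : 0 ≤ r := norm_nonneg x
    have key : r^k * ((Nat.factorial n) * Real.exp (-(r^2)/4) * (2*(1+r)^2)^n)
        ≤ (Nat.factorial n) * 2^n * ((Nat.factorial (k + 2*n)) * Real.exp 2) := by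
      have e1 : r^k * ((Nat.factorial n) * Real.exp (-(r^2)/4) * (2*(1+r)^2)^n)
          = (Nat.factorial n) * 2^n * (r^k * (1+r)^(2*n) * Real.exp (-(r^2)/4)) := by
        rw [mul_pow, ← pow_mul]; ring
      rw [e1]
      refine mul_le_mul_of_nonneg_left ?_ (by positivity)
      have h2 : r^k * (1+r)^(2*n) ≤ (1+r)^(k + 2*n) := by
        rw [pow_add]
        exact mul_le_mul_of_nonneg_right
          (pow_le_pow_left₀ hr0 (by linarith) k) (by positivity)
      calc r^k * (1+r)^(2*n) * Real.exp (-(r^2)/4)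
          ≤ (1+r)^(k + 2*n) * Real.exp (-(r^2)/4) :=
            mul_le_mul_of_nonneg_right h2 (le_of_lt (Real.exp_pos _))
        _ ≤ (Nat.factorial (k + 2*n)) * Real.exp 2 := poly_exp_bound _ r hr0
    refine le_trans ?_ key
    exact mul_le_mul_of_nonneg_left h1 (by positivity)

lemma gaussSchwartzR_apply (u : E) : gaussSchwartzR u = Real.exp (-(‖u‖^2)/4) := by
  show Real.exp (qform u u) = _
  rw [qform_diag]

noncomputable def gaussSchwartz : SchwartzMap E ℂ where
  toFun := fun u => (gaussSchwartzR u : ℂ)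
  smooth' := Complex.ofRealCLM.contDiff.comp (gaussSchwartzR (E := E)).smooth'
  decay' := by
    intro k n
    obtain ⟨C, hC⟩ := (gaussSchwartzR (E := E)).decay' k n
    refine ⟨C, fun x => ?_⟩
    have : ‖iteratedFDeriv ℝ n (Complex.ofRealLI ∘ (gaussSchwartzR (E := E))) x‖
        = ‖iteratedFDeriv ℝ n (gaussSchwartzR (E := E)) x‖ :=
      Complex.ofRealLI.norm_iteratedFDeriv_comp_left
        ((gaussSchwartzR (E := E)).smooth'.contDiffAt (x := x)) (mod_cast le_top)
    have heq : (fun u : E => (gaussSchwartzR u : ℂ))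
        = Complex.ofRealLI ∘ (gaussSchwartzR (E := E)) := rfl
    rw [heq, this]
    exact hC x

lemma gaussSchwartz_apply (u : E) : gaussSchwartz u = (Real.exp (-(‖u‖^2)/4) : ℂ) := by
  show ((gaussSchwartzR u : ℝ) : ℂ) = _
  rw [gaussSchwartzR_apply]

end AuxGauss


/-- if B is a Banach space continuously embedded in tempered distributions
    (encoded: a class S of functions with a norm N, pairing continuously with Schwartz
    functions via Schwartz seminorms) whose norm satisfies the scaling identity
    ‖f(λ(·−a))‖_B = λ⁻¹‖f‖_B, then sup_{t>0} t^{1/2}‖e^{tΔ}f‖_{L^∞} ≤ C‖f‖_B. -/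
theorem scaling_invariant_space_below_besov (d : ℕ) (hd : 0 < d)
    (S : Set (EuclideanSpace ℝ (Fin d) → ℂ))
    (N : (EuclideanSpace ℝ (Fin d) → ℂ) → ℝ)
    (hN : ∀ f ∈ S, 0 ≤ N f)
    (hpair : ∀ f ∈ S, ∀ φ : SchwartzMap (EuclideanSpace ℝ (Fin d)) ℂ,
      Integrable (fun y => f y * φ y))
    (hembed : ∃ (C₁ : ℝ) (k n : ℕ), ∀ f ∈ S,
      ∀ φ : SchwartzMap (EuclideanSpace ℝ (Fin d)) ℂ,
        ‖∫ y, f y * φ y‖ ≤ C₁ * N f * SchwartzMap.seminorm ℝ k n φ)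
    (hscale_mem : ∀ f ∈ S, ∀ lam : ℝ, 0 < lam → ∀ a : EuclideanSpace ℝ (Fin d),
      (fun x => f (lam • (x - a))) ∈ S)
    (hscale : ∀ f ∈ S, ∀ lam : ℝ, 0 < lam → ∀ a : EuclideanSpace ℝ (Fin d),
      N (fun x => f (lam • (x - a))) = lam⁻¹ * N f) :
    ∃ C : ℝ, ∀ f ∈ S, ∀ t : ℝ, 0 < t → ∀ x,
      Real.sqrt t * ‖heatOp d t f x‖ ≤ C * N f := by
  classical
  obtain ⟨C₁, k, n, hemb⟩ := hembed
  set φ : SchwartzMap (EuclideanSpace ℝ (Fin d)) ℂ := gaussSchwartz with hφ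
  set P : ℝ := SchwartzMap.seminorm ℝ k n φ with hP
  have hP0 : 0 ≤ P := apply_nonneg _ _
  refine ⟨(4*Real.pi)^(-(d:ℝ)/2) * C₁ * P, ?_⟩
  intro f hf t ht x
  set s : ℝ := Real.sqrt t with hsdef
  have hs : 0 < s := Real.sqrt_pos.2 ht
  have hs2 : s^2 = t := Real.sq_sqrt ht.le
  set a : EuclideanSpace ℝ (Fin d) := -(s⁻¹ • x) with ha
  set g : EuclideanSpace ℝ (Fin d) → ℂ := fun u => f (s • (u - a)) with hg
  have hgS : g ∈ S := hscale_mem f hf s hs a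
  have hgN : N g = s⁻¹ * N f := hscale f hf s hs a
  have hpair_bound : ‖∫ u, g u * φ u‖ ≤ C₁ * N g * P := hemb g hgS φ
  set c : ℝ := (4 * Real.pi * t) ^ (-(d:ℝ)/2) with hc
  have hc0 : 0 < c := Real.rpow_pos_of_pos (by positivity) _
  have step1 : heatOp d t f x
      = (c : ℂ) * ∫ y, f y * (Real.exp (-‖x - y‖^2/(4*t)) : ℂ) := by
    rw [heatOp, ← integral_const_mul]
    congr 1
    ext y
    rw [heatKernel]
    push_cast
    ring
  set F : EuclideanSpace ℝ (Fin d) → ℂ := fun u => g u * φ u with hF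
  have hptwise : ∀ y : EuclideanSpace ℝ (Fin d),
      F (s⁻¹ • y + a) = f y * (Real.exp (-‖x - y‖^2/(4*t)) : ℂ) := by
    intro y
    have h1 : g (s⁻¹ • y + a) = f y := by
      rw [hg]
      simp only
      congr 1
      rw [add_sub_cancel_right, smul_smul, mul_inv_cancel₀ hs.ne', one_smul]
    have h2 : φ (s⁻¹ • y + a) = (Real.exp (-‖x - y‖^2/(4*t)) : ℂ) := by
      rw [hφ, gaussSchwartz_apply]
      congr 2
      rw [ha]
      have hrw : s⁻¹ • y + -(s⁻¹ • x) = s⁻¹ • (y - x) := by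
        rw [smul_sub]; abel
      rw [hrw, norm_smul, Real.norm_eq_abs, abs_of_pos (inv_pos.2 hs), mul_pow,
        norm_sub_rev, ← hs2, inv_pow]
      field_simp
    rw [hF]; simp only; rw [h1, h2]
  have step2 : (∫ y, f y * (Real.exp (-‖x - y‖^2/(4*t)) : ℂ)) = (s^d : ℝ) • ∫ u, F u := by
    have e1 : (∫ y, f y * (Real.exp (-‖x - y‖^2/(4*t)) : ℂ))
        = ∫ y, F (s⁻¹ • y + a) := by
      congr 1; ext y; rw [hptwise y]
    have e2 : (∫ y : EuclideanSpace ℝ (Fin d), F (s⁻¹ • y + a))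
        = ∫ y : EuclideanSpace ℝ (Fin d), F (s⁻¹ • (y + s • a)) := by
      congr 1; ext y
      congr 1
      rw [smul_add, smul_smul, inv_mul_cancel₀ hs.ne', one_smul]
    have e3 : (∫ y : EuclideanSpace ℝ (Fin d), F (s⁻¹ • (y + s • a)))
        = ∫ y : EuclideanSpace ℝ (Fin d), F (s⁻¹ • y) :=
      integral_add_right_eq_self (fun z => F (s⁻¹ • z)) (s • a)
    have e4 : (∫ y : EuclideanSpace ℝ (Fin d), F (s⁻¹ • y))
        = |s ^ Module.finrank ℝ (EuclideanSpace ℝ (Fin d))| • ∫ u, F u :=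
      Measure.integral_comp_inv_smul volume F s
    rw [e1, e2, e3, e4, finrank_euclideanSpace_fin, abs_of_pos (pow_pos hs _)]
  have hnorm : ‖heatOp d t f x‖ = c * (s^d * ‖∫ u, F u‖) := by
    rw [step1, step2, norm_mul, Complex.norm_real, Real.norm_eq_abs, abs_of_pos hc0,
      norm_smul, Real.norm_eq_abs, abs_of_pos (pow_pos hs _)]
  have hcs : c * s^d = (4*Real.pi)^(-(d:ℝ)/2) := by
    have h1 : (s:ℝ)^d = t ^ ((d:ℝ)/2) := by
      rw [hsdef, Real.sqrt_eq_rpow, ← Real.rpow_natCast (t ^ ((1:ℝ)/2)) d,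
        ← Real.rpow_mul ht.le]
      congr 1
      ring
    rw [hc, Real.mul_rpow (by positivity) ht.le, h1, mul_assoc, ← Real.rpow_add ht,
      neg_div, neg_add_cancel, Real.rpow_zero, mul_one]
  calc Real.sqrt t * ‖heatOp d t f x‖ = (c * s^d) * (s * ‖∫ u, F u‖) := by
        rw [hnorm, ← hsdef]; ring
    _ ≤ (c * s^d) * (s * (C₁ * N g * P)) := by
        refine mul_le_mul_of_nonneg_left ?_ (by positivity)
        exact mul_le_mul_of_nonneg_left hpair_bound hs.le
    _ = (c * s^d) * (C₁ * P * N f) := by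
        rw [hgN]
        field_simp
    _ = (4*Real.pi)^(-(d:ℝ)/2) * C₁ * P * N f := by rw [hcs]; ring
end

section
/- For any locally bounded function Ψ on ℝ^+ × ℝ^d satisfying the subadditivity condition Ψ(t,ξ) ≤ Ψ(t,ξ−η) + Ψ(t,η) for all ξ, η, and for functions a, b with integrable Fourier transforms, the Fourier multiplier e^{Ψ(t,·)} applied to the product satisfies |F((ab)_Ψ)(t,ξ)| ≤ F(a_Ψ^+ b_Ψ^+)(t,ξ) pointwise in ξ, where f_Ψ := F^{-1}(e^{Ψ(t,·)} F f) and f^+ := F^{-1}|F f|. -/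
open MeasureTheory

theorem norm_smul_integral_le_integral_of_le {α E : Type*} [MeasurableSpace α] {μ : Measure α}
    [NormedAddCommGroup E] [NormedSpace ℝ E] {c : ℝ} (hc : 0 ≤ c) {f : α → E} {g : α → ℝ}
    (hg : Integrable g μ) (hfg : ∀ x, c * ‖f x‖ ≤ g x) :
    ‖c • ∫ x, f x ∂μ‖ ≤ ∫ x, g x ∂μ :=
  calc ‖c • ∫ x, f x ∂μ‖ = c * ‖∫ x, f x ∂μ‖ := by rw [norm_smul, Real.norm_of_nonneg hc]
    _ ≤ c * ∫ x, ‖f x‖ ∂μ := by gcongr; exact norm_integral_le_integral_norm f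
    _ = ∫ x, c * ‖f x‖ ∂μ := (integral_const_mul c _).symm
    _ ≤ ∫ x, g x ∂μ :=
      integral_mono_of_nonneg (.of_forall fun x => by positivity) hg (.of_forall hfg)

theorem exp_mul_norm_mul_le_of_le_add {R : Type*} [NormedRing R] {x y z : ℝ} (h : x ≤ y + z)
    (a b : R) : Real.exp x * ‖a * b‖ ≤ Real.exp y * ‖a‖ * (Real.exp z * ‖b‖) :=
  calc Real.exp x * ‖a * b‖ ≤ Real.exp (y + z) * (‖a‖ * ‖b‖) := by
        gcongr
        exact norm_mul_le a b
    _ = Real.exp y * ‖a‖ * (Real.exp z * ‖b‖) := by rw [Real.exp_add]; ring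

/- Stated on the Fourier side: `A = 𝓕a`, `B = 𝓕b`, so that `𝓕(ab)` is the convolution `A ⋆ B`
(up to a constant appearing on both sides) and the right-hand side is `𝓕(a_Ψ⁺ b_Ψ⁺)(ξ)`. -/
theorem subadditive_phase_on_products_general (d : ℕ) (t : ℝ)
    (Ψ : ℝ → EuclideanSpace ℝ (Fin d) → ℝ)
    (hΨ : ∀ ξ η, Ψ t ξ ≤ Ψ t (ξ - η) + Ψ t η)
    (A B : EuclideanSpace ℝ (Fin d) → ℂ)
    (ξ : EuclideanSpace ℝ (Fin d))
    (hconvΨ : Integrable (fun η =>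
      Real.exp (Ψ t (ξ - η)) * ‖A (ξ - η)‖ * (Real.exp (Ψ t η) * ‖B η‖))) :
    ‖Real.exp (Ψ t ξ) • ∫ η, A (ξ - η) * B η‖ ≤
      ∫ η, Real.exp (Ψ t (ξ - η)) * ‖A (ξ - η)‖ * (Real.exp (Ψ t η) * ‖B η‖) :=
  norm_smul_integral_le_integral_of_le (Real.exp_pos _).le hconvΨ fun η =>
    exp_mul_norm_mul_le_of_le_add (hΨ ξ η) _ _

/-- for a subadditive phase Ψ, the multiplier e^{Ψ(t,·)} acting on a
    product satisfies |𝓕((ab)_Ψ)(t,ξ)| ≤ 𝓕(a_Ψ⁺ b_Ψ⁺)(t,ξ) pointwise in ξ.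
    Stated on the Fourier side: A = 𝓕a, B = 𝓕b, so that 𝓕(ab) is the convolution
    A ⋆ B (up to a universal constant appearing on both sides), and
    𝓕(a_Ψ⁺ b_Ψ⁺)(ξ) = ∫ e^{Ψ(t,ξ−η)}|A(ξ−η)| e^{Ψ(t,η)}|B(η)| dη. -/
theorem subadditive_phase_on_products (d : ℕ) (t : ℝ)
    (Ψ : ℝ → EuclideanSpace ℝ (Fin d) → ℝ)
    (hΨ : ∀ ξ η, Ψ t ξ ≤ Ψ t (ξ - η) + Ψ t η)
    (A B : EuclideanSpace ℝ (Fin d) → ℂ)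
    (hA : Integrable A) (hB : Integrable B)
    (ξ : EuclideanSpace ℝ (Fin d))
    (hconv : Integrable (fun η => A (ξ - η) * B η))
    (hconvΨ : Integrable (fun η =>
      Real.exp (Ψ t (ξ - η)) * ‖A (ξ - η)‖ * (Real.exp (Ψ t η) * ‖B η‖))) :
    ‖Real.exp (Ψ t ξ) • ∫ η, A (ξ - η) * B η‖ ≤
      ∫ η, Real.exp (Ψ t (ξ - η)) * ‖A (ξ - η)‖ * (Real.exp (Ψ t η) * ‖B η‖) :=
  subadditive_phase_on_products_general d t Ψ hΨ A B ξ hconvΨ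
end
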